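/- Suppose Σ_{n≥1} |ρ(n)| < ∞ and m := Σ_{n≥1} n K(n) < ∞. Then for every β ≥ 0 and every h ∈ ℝ, liminf_{n→∞} (1/n) log Z^{free}_n(β,h) ≥ (1/m) ( h + (β²/2)(1 + 2 Σ_{n≥1} ρ(n) u(n)) ). In particular, if h > −(β²/2)(1 + 2 Σ_{n≥1} ρ(n) u(n)) then liminf_{n→∞} (1/n) log Z^{free}_n(β,h) > 0. -/

import Mathlib

open Real Filter Finset

noncomputable def annWeight (K ρ : ℕ → ℝ) (β h : ℝ) {m : ℕ} (c : Composition m) : ℝ :=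
  Real.exp ((c.length : ℝ) * (h + β ^ 2 / 2)
      + β ^ 2 * ∑ i : Fin c.length, ∑ j : Fin c.length,
          if (i : ℕ) < (j : ℕ) then
            ρ (c.sizeUpTo ((j : ℕ) + 1) - c.sizeUpTo ((i : ℕ) + 1)) else 0)
    * ∏ i : Fin c.length, K (c.blocksFun i)

/-- The annealed partition function `Z_n(β,h)`: the sum over `k ≥ 1` and tuples
`(l_1,…,l_k)` of positive integers with `l_1+⋯+l_k = n` (i.e. compositions of `n`) of
`exp(k(h+β²/2) + β² Σ_{1≤i<j≤k} ρ(τ_j − τ_i)) ∏ K(l_i)`, where `τ_i = l_1+⋯+l_i`. -/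
noncomputable def Zann (K ρ : ℕ → ℝ) (β h : ℝ) (n : ℕ) : ℝ :=
  ∑ c : Composition n, annWeight K ρ β h c

/-- The renewal mass function: `u(0) = 1`, `u(n) = Σ_{k=1}^{n} K(k) u(n−k)`,
so that `u(n) = P(n ∈ τ)`. -/
noncomputable def renewalMass (K : ℕ → ℝ) : ℕ → ℝ
  | 0 => 1
  | n + 1 => ∑ k ∈ Finset.range (n + 1), K (k + 1) * renewalMass K (n - k)

/-- Tail of `K`: `Σ_{l > r} K(l)`. -/
noncomputable def tailK (K : ℕ → ℝ) (r : ℕ) : ℝ := ∑' l : ℕ, K (r + 1 + l)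

/-- The free annealed partition function: summing over `k ≥ 0` and renewal points
`0 < t_1 < ⋯ < t_k ≤ n` (grouped by `m = t_k`, the renewal points in `[1,m]` being
parametrized by compositions of `m`), with tail factor `Σ_{l > n−t_k} K(l)`,
and the `k = 0` term equal to `Σ_{l > n} K(l)`. -/
noncomputable def Zfree (K ρ : ℕ → ℝ) (β h : ℝ) (n : ℕ) : ℝ :=
  tailK K n + ∑ m ∈ Finset.Icc 1 n, Zann K ρ β h m * tailK K (n - m)

/-!
Jensen's inequality for the free renewal measure (gaps weighted by `K`, the excursion after
the last renewal by the tail of `K`) bounds `log Z^free_n` below by the expected energy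
`(h + β²/2) E[#renewals in (0, n]] + β² E[∑_{i<j} ρ(τ_j - τ_i)]`. Splitting off the last
block of a composition turns both expectations into solutions of the renewal equation
`a = g + K ⋆ a`, namely `∑_{t ≤ n} u(t)` and `∑_{s ≤ n} u(s) ∑_{d ≤ n - s} ρ(d) u(d)`.
With `m = ∑ n K(n)`, the elementary renewal theorem makes the first `n/m + o(n)`; since the
inner sums converge to `∑ ρ(d) u(d)` and `u ≤ 1`, the second is `(n/m) ∑ ρ(d) u(d) + o(n)`.
The crude bound `log Z^free_n ≤ n (|h + β²/2| + β² ∑ |ρ|)` is needed for the liminf not to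
be a junk value.
-/

open Topology

lemma tendsto_mul_add_div_nat (a b : ℝ) : Tendsto (fun n : ℕ => (a * n + b) / n) atTop (𝓝 a) := by
  have h := tendsto_const_nhds (x := a) |>.add (tendsto_const_div_atTop_nhds_zero_nat b)
  rw [add_zero] at h
  refine h.congr' ?_
  filter_upwards [eventually_ge_atTop 1] with n hn
  have : (n : ℝ) ≠ 0 := by positivity
  field_simp

lemma sum_Icc_one_sub_eq_sum_range {M : Type*} [AddCommMonoid M] (f : ℕ → M) (n : ℕ) :
    ∑ s ∈ Icc 1 n, f (n - s) = ∑ i ∈ range n, f i :=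
  sum_nbij' (fun s => n - s) (fun i => n - i) (by intro s; simp; omega) (by intro i; simp; omega)
    (by intro s; simp; omega) (by intro i; simp; omega) fun _ _ => rfl

lemma tendsto_sum_Icc_mul_div {a C : ℕ → ℝ} {L c : ℝ} (ha : ∀ n, |a n| ≤ 1)
    (hA : Tendsto (fun n : ℕ => (∑ s ∈ Icc 1 n, a s) / n) atTop (𝓝 L))
    (hC : Tendsto C atTop (𝓝 c)) :
    Tendsto (fun n : ℕ => (∑ s ∈ Icc 1 n, a s * C (n - s)) / n) atTop (𝓝 (c * L)) := by
  have herr : Tendsto (fun n : ℕ => (∑ s ∈ Icc 1 n, a s * (C (n - s) - c)) / n) atTop (𝓝 0) := by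
    refine squeeze_zero_norm (fun n => ?_) (tendsto_iff_norm_sub_tendsto_zero.1 hC).cesaro
    rw [norm_div, RCLike.norm_natCast, div_eq_inv_mul, ← sum_Icc_one_sub_eq_sum_range]
    refine mul_le_mul_of_nonneg_left ((norm_sum_le _ _).trans (sum_le_sum fun s _ => ?_))
      (by positivity)
    rw [norm_mul]
    exact mul_le_of_le_one_left (norm_nonneg _) (ha s)
  have h := (hA.const_mul c).add herr
  rw [add_zero] at h
  refine h.congr fun n => ?_
  rw [← mul_div_assoc, ← add_div, mul_sum, ← sum_add_distrib]
  exact congrArg (· / _) (sum_congr rfl fun s _ => by ring)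

lemma Real.exp_sum_mul_le_sum_mul_exp {ι : Type*} {s : Finset ι} {p x : ι → ℝ}
    (hp : ∀ i ∈ s, 0 ≤ p i) (hp1 : ∑ i ∈ s, p i = 1) :
    exp (∑ i ∈ s, p i * x i) ≤ ∑ i ∈ s, p i * exp (x i) := by
  simpa only [smul_eq_mul] using convexOn_exp.map_sum_le hp hp1 fun i _ => Set.mem_univ (x i)

lemma Filter.le_liminf_of_tendsto_of_eventually_le {α : Type*} {l : Filter α} [l.NeBot]
    {f g : α → ℝ} {a B : ℝ} (hg : Tendsto g l (𝓝 a)) (hgf : ∀ᶠ n in l, g n ≤ f n)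
    (hfB : ∀ᶠ n in l, f n ≤ B) : a ≤ liminf f l :=
  hg.liminf_eq ▸ liminf_le_liminf hgf hg.isBoundedUnder_ge
    (isBoundedUnder_of_eventually_le hfB).isCoboundedUnder_ge

namespace Composition

variable {k n : ℕ}

def snoc (c : Composition k) (hkn : k < n) : Composition n where
  blocks := c.blocks ++ [n - k]
  blocks_pos := by
    simp only [List.mem_append, List.mem_singleton]
    rintro i (hi | rfl)
    · exact c.blocks_pos hi
    · omega
  blocks_sum := by simp [c.blocks_sum]; omega

@[simp]
lemma blocks_snoc (c : Composition k) (hkn : k < n) :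
    (c.snoc hkn).blocks = c.blocks ++ [n - k] := rfl

@[simp]
lemma length_snoc (c : Composition k) (hkn : k < n) :
    (c.snoc hkn).length = c.length + 1 := by
  simp [Composition.length]

lemma sizeUpTo_snoc_of_le (c : Composition k) (hkn : k < n) {i : ℕ} (hi : i ≤ c.length) :
    (c.snoc hkn).sizeUpTo i = c.sizeUpTo i := by
  simp only [sizeUpTo, blocks_snoc, List.take_append_of_le_length hi]

lemma sizeUpTo_snoc_length_add_one (c : Composition k) (hkn : k < n) :
    (c.snoc hkn).sizeUpTo (c.length + 1) = n := by
  rw [← length_snoc c hkn, sizeUpTo_length]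

lemma snoc_injective :
    Function.Injective fun x : Σ k : Fin n, Composition k => x.2.snoc x.1.isLt := by
  rintro ⟨⟨k₁, hk₁⟩, c₁⟩ ⟨⟨k₂, hk₂⟩, c₂⟩ h
  obtain ⟨hc, -⟩ := List.append_inj' (congrArg blocks h) rfl
  obtain rfl : k₁ = k₂ := c₁.blocks_sum.symm.trans ((congrArg List.sum hc).trans c₂.blocks_sum)
  obtain rfl : c₁ = c₂ := Composition.ext hc
  rfl

lemma snoc_surjective (hn : 0 < n) :
    Function.Surjective fun x : Σ k : Fin n, Composition k => x.2.snoc x.1.isLt := by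
  intro c
  have hne : c.blocks ≠ [] := by simpa using hn.ne'
  have hsplit := List.dropLast_append_getLast hne
  have hlast : 0 < c.blocks.getLast hne := c.blocks_pos (List.getLast_mem hne)
  have hsum := c.blocks_sum
  rw [← hsplit, List.sum_append, List.sum_singleton] at hsum
  refine ⟨⟨⟨c.blocks.dropLast.sum, by omega⟩, ⟨c.blocks.dropLast,
    fun hi => c.blocks_pos (List.mem_of_mem_dropLast hi), rfl⟩⟩, Composition.ext ?_⟩
  simp only [blocks_snoc]
  conv_rhs => rw [← hsplit]
  congr 2
  omega

lemma sum_eq_sum_sum_snoc {M : Type*} [AddCommMonoid M] (hn : 0 < n)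
    (F : Composition n → M) :
    ∑ c, F c = ∑ k : Fin n, ∑ c : Composition k, F (c.snoc k.isLt) := by
  rw [← Fintype.sum_bijective _ ⟨snoc_injective, snoc_surjective hn⟩ _ F fun _ => rfl,
    Finset.sum_sigma']
  rfl

instance : Subsingleton (Composition 0) :=
  ⟨fun a b => Composition.ext (by rw [a.blocks_eq_nil.2 rfl, b.blocks_eq_nil.2 rfl])⟩

section Statistics

variable {M : Type*}

def blockWeight [CommMonoid M] (K : ℕ → M) (c : Composition n) : M :=
  ∏ i, K (c.blocksFun i)

-- The renewal points `τ_1 < ⋯ < τ_k = n` of `c` are `c.sizeUpTo (i + 1)`, `i < k`.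
def pointSum [AddCommMonoid M] (f : ℕ → M) (c : Composition n) : M :=
  ∑ i ∈ range c.length, f (c.sizeUpTo (i + 1))

def pairSum [AddCommMonoid M] (f : ℕ → M) (c : Composition n) : M :=
  ∑ j ∈ range c.length, ∑ i ∈ range j, f (c.sizeUpTo (j + 1) - c.sizeUpTo (i + 1))

lemma blockWeight_eq_prod_map [CommMonoid M] (K : ℕ → M) (c : Composition n) :
    c.blockWeight K = (c.blocks.map K).prod := by
  rw [blockWeight, ← c.ofFn_blocksFun, List.map_ofFn, List.prod_ofFn]
  rfl

lemma blockWeight_snoc [CommMonoid M] (K : ℕ → M) (c : Composition k) (hkn : k < n) :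
    (c.snoc hkn).blockWeight K = c.blockWeight K * K (n - k) := by
  simp [blockWeight_eq_prod_map]

lemma pointSum_snoc [AddCommMonoid M] (f : ℕ → M) (c : Composition k) (hkn : k < n) :
    (c.snoc hkn).pointSum f = c.pointSum f + f n := by
  rw [pointSum, length_snoc, sum_range_succ, sizeUpTo_snoc_length_add_one]
  congr 1
  refine sum_congr rfl fun i hi => ?_
  rw [sizeUpTo_snoc_of_le _ _ (by simp at hi; omega)]

lemma pairSum_snoc [AddCommMonoid M] (f : ℕ → M) (c : Composition k) (hkn : k < n) :
    (c.snoc hkn).pairSum f = c.pairSum f + c.pointSum fun t => f (n - t) := by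
  rw [pairSum, length_snoc, sum_range_succ, sizeUpTo_snoc_length_add_one]
  congr 1
  · refine sum_congr rfl fun j hj => sum_congr rfl fun i hi => ?_
    simp only [mem_range] at hi hj
    rw [sizeUpTo_snoc_of_le _ _ (by omega), sizeUpTo_snoc_of_le _ _ (by omega)]
  · refine sum_congr rfl fun i hi => ?_
    rw [sizeUpTo_snoc_of_le _ _ (by simp at hi; omega)]

lemma pointSum_zero [AddCommMonoid M] (f : ℕ → M) (c : Composition 0) :
    c.pointSum f = 0 := by
  simp [pointSum, c.length_eq_zero.2 rfl]

lemma pairSum_zero [AddCommMonoid M] (f : ℕ → M) (c : Composition 0) :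
    c.pairSum f = 0 := by
  simp [pairSum, c.length_eq_zero.2 rfl]

lemma blockWeight_zero [CommMonoid M] (K : ℕ → M) (c : Composition 0) :
    c.blockWeight K = 1 := by
  simp [blockWeight_eq_prod_map, c.blocks_eq_nil.2 rfl]

lemma pairSum_eq_sum_ite [AddCommMonoid M] (f : ℕ → M) (c : Composition n) :
    c.pairSum f = ∑ i : Fin c.length, ∑ j : Fin c.length,
      if (i : ℕ) < (j : ℕ) then f (c.sizeUpTo ((j : ℕ) + 1) - c.sizeUpTo ((i : ℕ) + 1)) else 0 := by
  have hrow : ∀ i, (∑ j : Fin c.length,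
      if i < (j : ℕ) then f (c.sizeUpTo ((j : ℕ) + 1) - c.sizeUpTo (i + 1)) else 0)
      = ∑ j ∈ range c.length, if i < j then f (c.sizeUpTo (j + 1) - c.sizeUpTo (i + 1)) else 0 :=
    fun i => Fin.sum_univ_eq_sum_range
      (fun j => if i < j then f (c.sizeUpTo (j + 1) - c.sizeUpTo (i + 1)) else 0) _
  rw [Fin.sum_univ_eq_sum_range (fun i => ∑ j : Fin c.length,
    if i < (j : ℕ) then f (c.sizeUpTo ((j : ℕ) + 1) - c.sizeUpTo (i + 1)) else 0)]
  simp_rw [hrow]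
  rw [sum_comm, pairSum]
  refine sum_congr rfl fun j hj => ?_
  rw [← sum_filter]
  refine sum_congr ?_ fun _ _ => rfl
  ext i
  simp only [mem_range, mem_filter] at hj ⊢
  omega

end Statistics

lemma blockWeight_nonneg {K : ℕ → ℝ} (hK : ∀ n, 0 ≤ K (n + 1)) (c : Composition n) :
    0 ≤ c.blockWeight K :=
  prod_nonneg fun i _ => by
    obtain ⟨b, hb⟩ : ∃ b, c.blocksFun i = b + 1 :=
      ⟨_, (Nat.sub_add_cancel (c.one_le_blocksFun i)).symm⟩
    rw [hb]
    exact hK b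

lemma sizeUpTo_lt_sizeUpTo (c : Composition n) {i j : ℕ} (hij : i < j) (hj : j ≤ c.length) :
    c.sizeUpTo i < c.sizeUpTo j :=
  (c.sizeUpTo_strict_mono (by omega)).trans_le (c.monotone_sizeUpTo hij)

lemma pairSum_le_length_mul_tsum {f : ℕ → ℝ} (hf : Summable fun d => |f d|)
    (c : Composition n) : c.pairSum f ≤ c.length * ∑' d, |f d| := by
  have hrow : ∀ j ∈ range c.length,
      ∑ i ∈ range j, f (c.sizeUpTo (j + 1) - c.sizeUpTo (i + 1)) ≤ ∑' d, |f d| := by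
    intro j hj
    rw [mem_range] at hj
    -- the gaps in row `j` are distinct, so the row is bounded by the whole series
    have hinj : Set.InjOn (fun i => c.sizeUpTo (j + 1) - c.sizeUpTo (i + 1)) (range j) := by
      intro i₁ hi₁ i₂ hi₂ heq
      simp only [coe_range, Set.mem_Iio] at hi₁ hi₂ heq
      have h₁ := c.monotone_sizeUpTo (show i₁ + 1 ≤ j + 1 by omega)
      have h₂ := c.monotone_sizeUpTo (show i₂ + 1 ≤ j + 1 by omega)
      by_contra hne
      rcases Nat.lt_or_gt_of_ne hne with h | h <;>
        have := c.sizeUpTo_lt_sizeUpTo (Nat.add_lt_add_right h 1) (by omega) <;> omega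
    calc ∑ i ∈ range j, f (c.sizeUpTo (j + 1) - c.sizeUpTo (i + 1))
        ≤ ∑ i ∈ range j, |f (c.sizeUpTo (j + 1) - c.sizeUpTo (i + 1))| :=
          sum_le_sum fun _ _ => le_abs_self _
      _ = ∑ d ∈ (range j).image fun i => c.sizeUpTo (j + 1) - c.sizeUpTo (i + 1), |f d| :=
          (sum_image (f := fun d => |f d|) hinj).symm
      _ ≤ ∑' d, |f d| := hf.sum_le_tsum _ fun _ _ => abs_nonneg _
  simpa [pairSum] using sum_le_card_nsmul _ _ _ hrow

end Composition

section Renewal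

variable (K : ℕ → ℝ)

lemma renewalMass_zero : renewalMass K 0 = 1 := by
  rw [renewalMass]

lemma sum_Icc_renewalMass (n : ℕ) :
    ∑ t ∈ Icc 1 n, renewalMass K t = ∑ t ∈ range (n + 1), renewalMass K t - 1 := by
  rw [range_eq_Ico, sum_eq_sum_Ico_succ_bot n.succ_pos, renewalMass_zero, zero_add,
    Nat.succ_eq_add_one, Ico_add_one_right_eq_Icc]
  ring

lemma renewalMass_eq_sum_range {n : ℕ} (hn : 0 < n) :
    renewalMass K n = ∑ k ∈ range n, K (n - k) * renewalMass K k := by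
  obtain ⟨n, rfl⟩ := Nat.exists_eq_add_one_of_ne_zero hn.ne'
  rw [renewalMass, ← sum_range_reflect (fun k => K (k + 1) * renewalMass K (n - k))]
  refine sum_congr rfl fun k hk => ?_
  rw [mem_range] at hk
  rw [show n + 1 - 1 - k + 1 = n + 1 - k by omega, show n - (n + 1 - 1 - k) = k by omega]

lemma sum_range_mul_sum_Icc_mul_renewalMass (φ : ℕ → ℝ) (n : ℕ) :
    ∑ k ∈ range n, K (n - k) * ∑ t ∈ Icc 1 k, φ t * renewalMass K (k - t)
      = ∑ t ∈ Ico 1 n, φ t * renewalMass K (n - t) := by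
  simp_rw [mul_sum]
  rw [sum_comm' (t' := Ico 1 n) (s' := fun t => Ico t n)
    (by intro k t; simp only [mem_range, mem_Icc, mem_Ico]; omega)]
  refine sum_congr rfl fun t ht => ?_
  rw [mem_Ico] at ht
  rw [renewalMass_eq_sum_range K (by omega : 0 < n - t), mul_sum, sum_Ico_eq_sum_range]
  refine sum_congr rfl fun j _ => ?_
  rw [Nat.add_sub_cancel_left, Nat.sub_sub]
  ring

lemma eq_sum_Icc_mul_renewalMass {a g : ℕ → ℝ} (h0 : a 0 = 0)
    (hrec : ∀ n, 0 < n → a n = g n + ∑ k ∈ range n, K (n - k) * a k) (n : ℕ) :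
    a n = ∑ t ∈ Icc 1 n, g t * renewalMass K (n - t) := by
  induction n using Nat.strong_induction_on with
  | _ n ih =>
    rcases n.eq_zero_or_pos with rfl | hn
    · simp [h0]
    rw [hrec n hn, sum_congr rfl fun k hk => by rw [ih k (mem_range.1 hk)],
      sum_range_mul_sum_Icc_mul_renewalMass, ← Ico_add_one_right_eq_Icc,
      sum_Ico_succ_top (by omega), Nat.sub_self, renewalMass_zero, mul_one, add_comm]

lemma sum_blockWeight_mul_eq_sum_snoc {n : ℕ} (hn : 0 < n) (F : Composition n → ℝ) :
    ∑ c, c.blockWeight K * F c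
      = ∑ k : Fin n, K (n - k) * ∑ c : Composition k, c.blockWeight K * F (c.snoc k.isLt) := by
  rw [Composition.sum_eq_sum_sum_snoc hn]
  refine sum_congr rfl fun k _ => ?_
  rw [mul_sum]
  refine sum_congr rfl fun c _ => ?_
  rw [Composition.blockWeight_snoc]
  ring

lemma sum_blockWeight (n : ℕ) : ∑ c : Composition n, c.blockWeight K = renewalMass K n := by
  induction n using Nat.strong_induction_on with
  | _ n ih =>
    rcases n.eq_zero_or_pos with rfl | hn
    · rw [Fintype.sum_subsingleton _ (Composition.ones 0), Composition.blockWeight_zero,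
        renewalMass_zero]
    have hdec := sum_blockWeight_mul_eq_sum_snoc K hn fun _ => 1
    simp only [mul_one] at hdec
    rw [hdec, renewalMass_eq_sum_range K hn,
      ← Fin.sum_univ_eq_sum_range fun k => K (n - k) * renewalMass K k]
    exact sum_congr rfl fun k _ => by rw [ih k k.isLt]

lemma sum_blockWeight_mul_pointSum (f : ℕ → ℝ) (n : ℕ) :
    ∑ c : Composition n, c.blockWeight K * c.pointSum f
      = ∑ t ∈ Icc 1 n, f t * renewalMass K t * renewalMass K (n - t) := by
  refine eq_sum_Icc_mul_renewalMass K
    (a := fun n => ∑ c : Composition n, c.blockWeight K * c.pointSum f)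
    (by simp [Composition.pointSum_zero]) (fun n hn => ?_) n
  rw [sum_blockWeight_mul_eq_sum_snoc K hn, renewalMass_eq_sum_range K hn, mul_sum,
    ← sum_add_distrib, ← Fin.sum_univ_eq_sum_range]
  refine sum_congr rfl fun k _ => ?_
  simp_rw [Composition.pointSum_snoc, mul_add, sum_add_distrib, ← sum_mul, sum_blockWeight]
  ring

lemma sum_blockWeight_mul_pairSum (ρ : ℕ → ℝ) (n : ℕ) :
    ∑ c : Composition n, c.blockWeight K * c.pairSum ρ
      = ∑ t ∈ Icc 1 n, (∑ s ∈ Ico 1 t, renewalMass K s * (ρ (t - s) * renewalMass K (t - s)))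
          * renewalMass K (n - t) := by
  refine eq_sum_Icc_mul_renewalMass K
    (a := fun n => ∑ c : Composition n, c.blockWeight K * c.pairSum ρ)
    (by simp [Composition.pairSum_zero]) (fun n hn => ?_) n
  have hpoint : ∀ k : ℕ, ∑ c : Composition k, c.blockWeight K * c.pointSum (fun t => ρ (n - t))
      = ∑ t ∈ Icc 1 k, (ρ (n - t) * renewalMass K t) * renewalMass K (k - t) :=
    sum_blockWeight_mul_pointSum K _
  have hsplit : ∀ k : Fin n, K (n - k) * ∑ c : Composition k,
        c.blockWeight K * (c.snoc k.isLt).pairSum ρ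
      = K (n - k) * ∑ t ∈ Icc 1 (k : ℕ), (ρ (n - t) * renewalMass K t) * renewalMass K (k - t)
        + K (n - k) * ∑ c : Composition k, c.blockWeight K * c.pairSum ρ := by
    intro k
    simp_rw [Composition.pairSum_snoc, mul_add, sum_add_distrib, hpoint]
    ring
  rw [sum_blockWeight_mul_eq_sum_snoc K hn, sum_congr rfl fun k _ => hsplit k, sum_add_distrib,
    Fin.sum_univ_eq_sum_range
      (fun k => K (n - k) * ∑ t ∈ Icc 1 k, ρ (n - t) * renewalMass K t * renewalMass K (k - t)),
    Fin.sum_univ_eq_sum_range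
      (fun k => K (n - k) * ∑ c : Composition k, c.blockWeight K * c.pairSum ρ),
    sum_range_mul_sum_Icc_mul_renewalMass]
  congr 1
  exact sum_congr rfl fun s _ => by ring

end Renewal

section Tail

variable (K : ℕ → ℝ)

lemma tailK_nonneg (hK : ∀ n, 0 ≤ K (n + 1)) (r : ℕ) : 0 ≤ tailK K r :=
  tsum_nonneg fun l => by rw [add_right_comm]; exact hK _

lemma summable_tailK_summand (hKsum : HasSum (fun n => K (n + 1)) 1) (r : ℕ) :
    Summable fun l => K (r + 1 + l) :=
  ((summable_nat_add_iff r).2 hKsum.summable).congr fun l => congrArg K (by omega)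

lemma tailK_zero (hKsum : HasSum (fun n => K (n + 1)) 1) : tailK K 0 = 1 := by
  simpa [tailK, add_comm] using hKsum.tsum_eq

lemma tailK_eq_add_tailK_succ (hKsum : HasSum (fun n => K (n + 1)) 1) (r : ℕ) :
    tailK K r = K (r + 1) + tailK K (r + 1) := by
  rw [tailK, (summable_tailK_summand K hKsum r).tsum_eq_zero_add, tailK]
  simp only [add_zero]
  congr 1
  exact tsum_congr fun l => congrArg K (by omega)

lemma renewalMass_nonneg (hK : ∀ n, 0 ≤ K (n + 1)) (n : ℕ) : 0 ≤ renewalMass K n := by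
  induction n using Nat.strong_induction_on with
  | _ n ih =>
    rcases n with _ | n
    · simp [renewalMass_zero]
    · rw [renewalMass]
      exact sum_nonneg fun k hk => mul_nonneg (hK k) (ih _ (by omega))

/-- The renewal identity `∑_{t ≤ n} P(t ∈ τ) P(τ has no point in (t, n]) = 1`. -/
lemma sum_renewalMass_mul_tailK (hKsum : HasSum (fun n => K (n + 1)) 1) (n : ℕ) :
    ∑ t ∈ range (n + 1), renewalMass K t * tailK K (n - t) = 1 := by
  induction n with
  | zero => simp [renewalMass_zero, tailK_zero K hKsum]
  | succ n ih =>
    have hstep : ∀ t ∈ range (n + 1), renewalMass K t * tailK K (n + 1 - t)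
        = renewalMass K t * tailK K (n - t) - K (n + 1 - t) * renewalMass K t := by
      intro t ht
      rw [mem_range] at ht
      rw [tailK_eq_add_tailK_succ K hKsum (n - t), show n - t + 1 = n + 1 - t by omega]
      ring
    rw [sum_range_succ, sum_congr rfl hstep, sum_sub_distrib, ih,
      ← renewalMass_eq_sum_range K n.succ_pos, Nat.sub_self, tailK_zero K hKsum]
    ring

lemma renewalMass_le_one (hK : ∀ n, 0 ≤ K (n + 1)) (hKsum : HasSum (fun n => K (n + 1)) 1)
    (n : ℕ) : renewalMass K n ≤ 1 := by
  have := single_le_sum (f := fun t => renewalMass K t * tailK K (n - t))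
    (fun t _ => mul_nonneg (renewalMass_nonneg K hK t) (tailK_nonneg K hK _))
    (self_mem_range_succ n)
  rwa [sum_renewalMass_mul_tailK K hKsum, Nat.sub_self, tailK_zero K hKsum, mul_one] at this

lemma sum_tailK_mul_sum_Icc_mul_renewalMass (hKsum : HasSum (fun n => K (n + 1)) 1)
    (g : ℕ → ℝ) (n : ℕ) :
    ∑ m ∈ range (n + 1), tailK K (n - m) * ∑ t ∈ Icc 1 m, g t * renewalMass K (m - t)
      = ∑ t ∈ Icc 1 n, g t := by
  simp_rw [mul_sum]
  rw [sum_comm' (t' := Icc 1 n) (s' := fun t => Ico t (n + 1))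
    (by intro m t; simp only [mem_range, mem_Icc, mem_Ico]; omega)]
  refine sum_congr rfl fun t ht => ?_
  rw [mem_Icc] at ht
  rw [sum_Ico_eq_sum_range, show n + 1 - t = n - t + 1 by omega]
  calc _ = g t * ∑ j ∈ range (n - t + 1), renewalMass K j * tailK K (n - t - j) := by
        rw [mul_sum]
        refine sum_congr rfl fun j _ => ?_
        rw [Nat.add_sub_cancel_left, Nat.sub_sub]
        ring
    _ = g t := by rw [sum_renewalMass_mul_tailK K hKsum, mul_one]

end Tail

section RenewalTheorem

variable (K : ℕ → ℝ)

lemma sum_range_tailK (hKsum : HasSum (fun n => K (n + 1)) 1) (r : ℕ) :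
    ∑ j ∈ range r, tailK K j = ∑ i ∈ range r, ((i : ℝ) + 1) * K (i + 1) + r * tailK K r := by
  induction r with
  | zero => simp
  | succ r ih =>
    rw [sum_range_succ, ih, sum_range_succ, tailK_eq_add_tailK_succ K hKsum r]
    push_cast
    ring

lemma tendsto_mul_tailK (hK : ∀ n, 0 ≤ K (n + 1)) (hKsum : HasSum (fun n => K (n + 1)) 1)
    (hKmean : Summable fun n : ℕ => ((n : ℝ) + 1) * K (n + 1)) :
    Tendsto (fun r : ℕ => (r : ℝ) * tailK K r) atTop (𝓝 0) := by
  refine squeeze_zero (fun r => mul_nonneg r.cast_nonneg (tailK_nonneg K hK r)) (fun r => ?_)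
    (tendsto_sum_nat_add fun n : ℕ => ((n : ℝ) + 1) * K (n + 1))
  rw [tailK, ← tsum_mul_left]
  refine (summable_tailK_summand K hKsum r).mul_left _ |>.tsum_le_tsum (fun l => ?_)
    ((summable_nat_add_iff r).2 hKmean)
  rw [show r + 1 + l = l + r + 1 by omega]
  exact mul_le_mul_of_nonneg_right (by push_cast; linarith) (hK _)

lemma hasSum_tailK (hK : ∀ n, 0 ≤ K (n + 1)) (hKsum : HasSum (fun n => K (n + 1)) 1)
    (hKmean : Summable fun n : ℕ => ((n : ℝ) + 1) * K (n + 1)) :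
    HasSum (tailK K) (∑' n : ℕ, ((n : ℝ) + 1) * K (n + 1)) := by
  refine (hasSum_iff_tendsto_nat_of_nonneg (tailK_nonneg K hK) _).2 ?_
  have h := hKmean.hasSum.tendsto_sum_nat.add (tendsto_mul_tailK K hK hKsum hKmean)
  rw [add_zero] at h
  exact h.congr fun r => (sum_range_tailK K hKsum r).symm

lemma sum_renewalMass_mul_sum_tailK (hKsum : HasSum (fun n => K (n + 1)) 1) (n : ℕ) :
    ∑ t ∈ range (n + 1), renewalMass K t * ∑ j ∈ range (n + 1 - t), tailK K j = n + 1 := by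
  induction n with
  | zero => simp [renewalMass_zero, tailK_zero K hKsum]
  | succ n ih =>
    have hstep : ∀ t ∈ range (n + 1),
        renewalMass K t * ∑ j ∈ range (n + 1 + 1 - t), tailK K j
          = renewalMass K t * ∑ j ∈ range (n + 1 - t), tailK K j
            + renewalMass K t * tailK K (n + 1 - t) := by
      intro t ht
      rw [mem_range] at ht
      rw [show n + 1 + 1 - t = n + 1 - t + 1 by omega, sum_range_succ, mul_add]
    have hid := sum_renewalMass_mul_tailK K hKsum (n + 1)
    rw [sum_range_succ, Nat.sub_self] at hid
    rw [sum_range_succ, sum_congr rfl hstep, sum_add_distrib, ih,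
      show n + 1 + 1 - (n + 1) = 1 by omega, sum_range_one]
    push_cast
    linarith

lemma le_mul_sum_renewalMass (hK : ∀ n, 0 ≤ K (n + 1)) (hKsum : HasSum (fun n => K (n + 1)) 1)
    (hKmean : Summable fun n : ℕ => ((n : ℝ) + 1) * K (n + 1)) (n : ℕ) :
    (n : ℝ) + 1
      ≤ (∑' n : ℕ, ((n : ℝ) + 1) * K (n + 1)) * ∑ t ∈ range (n + 1), renewalMass K t := by
  rw [← sum_renewalMass_mul_sum_tailK K hKsum n, mul_sum]
  refine sum_le_sum fun t _ => ?_
  rw [mul_comm (∑' n : ℕ, _)]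
  exact mul_le_mul_of_nonneg_left
    (sum_le_hasSum _ (fun j _ => tailK_nonneg K hK j) (hasSum_tailK K hK hKsum hKmean))
    (renewalMass_nonneg K hK t)

lemma sum_tailK_mul_sum_renewalMass_le (hK : ∀ n, 0 ≤ K (n + 1))
    (hKsum : HasSum (fun n => K (n + 1)) 1) (R n : ℕ) :
    (∑ j ∈ range R, tailK K j) * ∑ t ∈ range (n + 1), renewalMass K t
      ≤ n + 1 + (∑ j ∈ range R, tailK K j) * R := by
  have hS : ∀ {r r'}, r ≤ r' → ∑ j ∈ range r, tailK K j ≤ ∑ j ∈ range r', tailK K j :=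
    fun h => sum_le_sum_of_subset_of_nonneg (range_mono h) fun j _ _ => tailK_nonneg K hK j
  have hS0 : 0 ≤ ∑ j ∈ range R, tailK K j := sum_nonneg fun j _ => tailK_nonneg K hK j
  rw [← sum_range_add_sum_Ico _ (Nat.sub_le (n + 1) R), mul_add]
  gcongr ?_ + ?_
  · calc (∑ j ∈ range R, tailK K j) * ∑ t ∈ range (n + 1 - R), renewalMass K t
        ≤ ∑ t ∈ range (n + 1 - R), renewalMass K t * ∑ j ∈ range (n + 1 - t), tailK K j := by
          rw [mul_sum]
          refine sum_le_sum fun t ht => ?_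
          rw [mem_range] at ht
          rw [mul_comm]
          exact mul_le_mul_of_nonneg_left (hS (by omega)) (renewalMass_nonneg K hK t)
      _ ≤ ∑ t ∈ range (n + 1), renewalMass K t * ∑ j ∈ range (n + 1 - t), tailK K j :=
          sum_le_sum_of_subset_of_nonneg (range_mono (Nat.sub_le _ _)) fun t _ _ =>
            mul_nonneg (renewalMass_nonneg K hK t) (sum_nonneg fun j _ => tailK_nonneg K hK j)
      _ = n + 1 := sum_renewalMass_mul_sum_tailK K hKsum n
  · refine mul_le_mul_of_nonneg_left ?_ hS0
    calc ∑ t ∈ Ico (n + 1 - R) (n + 1), renewalMass K t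
        ≤ ∑ t ∈ Ico (n + 1 - R) (n + 1), (1 : ℝ) :=
          sum_le_sum fun t _ => renewalMass_le_one K hK hKsum t
      _ ≤ R := by
          simp only [sum_const, Nat.card_Ico, nsmul_eq_mul, mul_one]
          exact_mod_cast (by omega : n + 1 - (n + 1 - R) ≤ R)

lemma one_le_sum_range_tailK (hK : ∀ n, 0 ≤ K (n + 1)) (hKsum : HasSum (fun n => K (n + 1)) 1)
    {r : ℕ} (hr : 1 ≤ r) : 1 ≤ ∑ j ∈ range r, tailK K j := by
  simpa [tailK_zero K hKsum] using
    sum_le_sum_of_subset_of_nonneg (range_mono hr) fun j _ _ => tailK_nonneg K hK j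

lemma one_le_mean (hK : ∀ n, 0 ≤ K (n + 1)) (hKsum : HasSum (fun n => K (n + 1)) 1)
    (hKmean : Summable fun n : ℕ => ((n : ℝ) + 1) * K (n + 1)) :
    1 ≤ ∑' n : ℕ, ((n : ℝ) + 1) * K (n + 1) :=
  calc (1 : ℝ) = ∑' n : ℕ, K (n + 1) := hKsum.tsum_eq.symm
    _ ≤ _ := hKsum.summable.tsum_le_tsum
      (fun n => le_mul_of_one_le_left (hK n) (by linarith [n.cast_nonneg (α := ℝ)])) hKmean

theorem tendsto_sum_Icc_renewalMass_div (hK : ∀ n, 0 ≤ K (n + 1))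
    (hKsum : HasSum (fun n => K (n + 1)) 1)
    (hKmean : Summable fun n : ℕ => ((n : ℝ) + 1) * K (n + 1)) :
    Tendsto (fun n : ℕ => (∑ t ∈ Icc 1 n, renewalMass K t) / n) atTop
      (𝓝 (1 / ∑' n : ℕ, ((n : ℝ) + 1) * K (n + 1))) := by
  set m := ∑' n : ℕ, ((n : ℝ) + 1) * K (n + 1)
  have hS := (hasSum_tailK K hK hKsum hKmean).tendsto_sum_nat
  have hm : 1 ≤ m := one_le_mean K hK hKsum hKmean
  rw [tendsto_order]
  refine ⟨fun a ha => ?_, fun a ha => ?_⟩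
  · filter_upwards [(tendsto_mul_add_div_nat (1 / m) (1 / m - 1)).eventually_const_lt ha]
      with n hlt
    refine hlt.trans_le (div_le_div_of_nonneg_right ?_ n.cast_nonneg)
    have hU : ((n : ℝ) + 1) / m ≤ ∑ t ∈ range (n + 1), renewalMass K t := by
      rw [div_le_iff₀ (by linarith)]
      linarith [le_mul_sum_renewalMass K hK hKsum hKmean n]
    calc 1 / m * n + (1 / m - 1) = ((n : ℝ) + 1) / m - 1 := by ring
      _ ≤ _ := by rw [sum_Icc_renewalMass]; linarith
  · obtain ⟨R, hR, hR1⟩ := ((tendsto_const_nhds.div hS (by linarith : m ≠ 0)).eventually_lt_const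
      (show 1 / m < a from ha) |>.and (eventually_ge_atTop 1)).exists
    set s := ∑ j ∈ range R, tailK K j
    have hs : 1 ≤ s := one_le_sum_range_tailK K hK hKsum hR1
    filter_upwards [(tendsto_mul_add_div_nat (1 / s) (1 / s + R - 1)).eventually_lt_const hR]
      with n hlt
    refine (div_le_div_of_nonneg_right ?_ n.cast_nonneg).trans_lt hlt
    have hU : ∑ t ∈ range (n + 1), renewalMass K t ≤ (n + 1 + s * R) / s := by
      rw [le_div_iff₀ (by linarith), mul_comm]
      exact sum_tailK_mul_sum_renewalMass_le K hK hKsum R n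
    calc _ ≤ (n + 1 + s * R) / s - 1 := by rw [sum_Icc_renewalMass]; linarith
      _ = 1 / s * n + (1 / s + R - 1) := by field_simp; ring

end RenewalTheorem

section FreePartitionFunction

variable (K ρ : ℕ → ℝ) (β h : ℝ)

noncomputable def annEnergy {m : ℕ} (c : Composition m) : ℝ :=
  c.length * (h + β ^ 2 / 2) + β ^ 2 * c.pairSum ρ

lemma annWeight_eq {m : ℕ} (c : Composition m) :
    annWeight K ρ β h c = exp (annEnergy ρ β h c) * c.blockWeight K := by
  rw [annWeight, annEnergy, Composition.pairSum_eq_sum_ite, Composition.blockWeight]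

/-- A configuration of the free renewal on `[0, n]`: its last point `m ≤ n` and its gaps up
to `m`. -/
def freeConfigs (n : ℕ) : Finset (Σ m, Composition m) :=
  (range (n + 1)).sigma fun _ => univ

noncomputable def freeWeight (n : ℕ) (x : Σ m, Composition m) : ℝ :=
  x.2.blockWeight K * tailK K (n - x.1)

variable {K} in
lemma freeWeight_nonneg (hK : ∀ n, 0 ≤ K (n + 1)) (n : ℕ) (x : Σ m, Composition m) :
    0 ≤ freeWeight K n x :=
  mul_nonneg (x.2.blockWeight_nonneg hK) (tailK_nonneg K hK _)

lemma sum_freeWeight_mul (n : ℕ) (F : ∀ m, Composition m → ℝ) :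
    ∑ x ∈ freeConfigs n, freeWeight K n x * F x.1 x.2
      = ∑ m ∈ range (n + 1), tailK K (n - m) * ∑ c : Composition m, c.blockWeight K * F m c := by
  rw [freeConfigs, sum_sigma]
  refine sum_congr rfl fun m _ => ?_
  rw [mul_sum]
  exact sum_congr rfl fun c _ => by rw [freeWeight]; ring

lemma sum_freeWeight (hKsum : HasSum (fun n => K (n + 1)) 1) (n : ℕ) :
    ∑ x ∈ freeConfigs n, freeWeight K n x = 1 := by
  have h := sum_freeWeight_mul K n fun _ _ => 1
  simp only [mul_one, sum_blockWeight] at h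
  rw [h, ← sum_renewalMass_mul_tailK K hKsum n]
  exact sum_congr rfl fun m _ => mul_comm _ _

lemma sum_freeWeight_mul_length (hKsum : HasSum (fun n => K (n + 1)) 1) (n : ℕ) :
    ∑ x ∈ freeConfigs n, freeWeight K n x * x.2.length = ∑ t ∈ Icc 1 n, renewalMass K t := by
  have hlen : ∀ m (c : Composition m), (c.length : ℝ) = c.pointSum fun _ => 1 := by
    simp [Composition.pointSum]
  refine (sum_freeWeight_mul K n fun _ c => (c.length : ℝ)).trans ?_
  simp_rw [hlen, sum_blockWeight_mul_pointSum, one_mul]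
  exact sum_tailK_mul_sum_Icc_mul_renewalMass K hKsum _ n

lemma sum_freeWeight_mul_pairSum (hKsum : HasSum (fun n => K (n + 1)) 1) (n : ℕ) :
    ∑ x ∈ freeConfigs n, freeWeight K n x * x.2.pairSum ρ
      = ∑ s ∈ Icc 1 n, renewalMass K s
          * ∑ j ∈ range (n - s), ρ (j + 1) * renewalMass K (j + 1) := by
  refine (sum_freeWeight_mul K n fun _ c => c.pairSum ρ).trans ?_
  simp_rw [sum_blockWeight_mul_pairSum]
  rw [sum_tailK_mul_sum_Icc_mul_renewalMass K hKsum _ n, sum_comm' (t' := Icc 1 n)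
    (s' := fun s => Ico (s + 1) (n + 1)) (by intro t s; simp only [mem_Icc, mem_Ico]; omega)]
  refine sum_congr rfl fun s hs => ?_
  rw [mem_Icc] at hs
  rw [← mul_sum, sum_Ico_eq_sum_range, show n + 1 - (s + 1) = n - s by omega]
  refine congrArg _ (sum_congr rfl fun j _ => ?_)
  rw [show s + 1 + j - s = j + 1 by omega]

lemma Zfree_eq_sum_freeWeight_mul_exp (n : ℕ) :
    Zfree K ρ β h n = ∑ x ∈ freeConfigs n, freeWeight K n x * exp (annEnergy ρ β h x.2) := by
  refine Eq.trans ?_ (sum_freeWeight_mul K n fun _ c => exp (annEnergy ρ β h c)).symm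
  have h0 : ∑ c : Composition 0, c.blockWeight K * exp (annEnergy ρ β h c) = 1 := by
    rw [Fintype.sum_subsingleton _ (Composition.ones 0)]
    simp [annEnergy, Composition.blockWeight_zero, Composition.pairSum_zero]
  rw [Zfree, range_eq_Ico, sum_eq_sum_Ico_succ_bot n.succ_pos, Nat.sub_zero, h0, mul_one,
    zero_add, Nat.succ_eq_add_one, Ico_add_one_right_eq_Icc]
  refine congrArg _ (sum_congr rfl fun m _ => ?_)
  rw [Zann, mul_comm]
  exact congrArg _ (sum_congr rfl fun c _ => by rw [annWeight_eq, mul_comm])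

noncomputable def meanEnergy (n : ℕ) : ℝ :=
  ∑ x ∈ freeConfigs n, freeWeight K n x * annEnergy ρ β h x.2

lemma meanEnergy_eq (hKsum : HasSum (fun n => K (n + 1)) 1) (n : ℕ) :
    meanEnergy K ρ β h n = (h + β ^ 2 / 2) * ∑ t ∈ Icc 1 n, renewalMass K t
      + β ^ 2 * ∑ s ∈ Icc 1 n, renewalMass K s
          * ∑ j ∈ range (n - s), ρ (j + 1) * renewalMass K (j + 1) := by
  rw [← sum_freeWeight_mul_length K hKsum, ← sum_freeWeight_mul_pairSum K ρ hKsum, mul_sum,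
    mul_sum, ← sum_add_distrib]
  exact sum_congr rfl fun x _ => by rw [annEnergy]; ring

variable {K}

lemma exp_meanEnergy_le_Zfree (hK : ∀ n, 0 ≤ K (n + 1)) (hKsum : HasSum (fun n => K (n + 1)) 1)
    (n : ℕ) : exp (meanEnergy K ρ β h n) ≤ Zfree K ρ β h n := by
  rw [Zfree_eq_sum_freeWeight_mul_exp]
  exact Real.exp_sum_mul_le_sum_mul_exp (fun x _ => freeWeight_nonneg hK n x)
    (sum_freeWeight K hKsum n)

lemma meanEnergy_le_log_Zfree (hK : ∀ n, 0 ≤ K (n + 1)) (hKsum : HasSum (fun n => K (n + 1)) 1)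
    (n : ℕ) : meanEnergy K ρ β h n ≤ log (Zfree K ρ β h n) := by
  have hJ := exp_meanEnergy_le_Zfree ρ β h hK hKsum n
  exact (le_log_iff_exp_le ((exp_pos _).trans_le hJ)).2 hJ

variable {ρ} in
lemma tendsto_meanEnergy_div (hK : ∀ n, 0 ≤ K (n + 1)) (hKsum : HasSum (fun n => K (n + 1)) 1)
    (hρ : Summable fun n : ℕ => |ρ (n + 1)|)
    (hKmean : Summable fun n : ℕ => ((n : ℝ) + 1) * K (n + 1)) :
    Tendsto (fun n : ℕ => meanEnergy K ρ β h n / n) atTop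
      (𝓝 ((1 / ∑' n : ℕ, ((n : ℝ) + 1) * K (n + 1)) *
        (h + β ^ 2 / 2 * (1 + 2 * ∑' n : ℕ, ρ (n + 1) * renewalMass K (n + 1))))) := by
  have hu : ∀ n, |renewalMass K n| ≤ 1 := fun n =>
    abs_le.2 ⟨by linarith [renewalMass_nonneg K hK n], renewalMass_le_one K hK hKsum n⟩
  have hρu : Summable fun n => ρ (n + 1) * renewalMass K (n + 1) :=
    hρ.of_norm_bounded fun n => by
      rw [norm_mul, Real.norm_eq_abs]
      exact mul_le_of_le_one_right (abs_nonneg _) (hu _)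
  have hU := tendsto_sum_Icc_renewalMass_div K hK hKsum hKmean
  have hlim := (hU.const_mul (h + β ^ 2 / 2)).add
    ((tendsto_sum_Icc_mul_div hu hU hρu.hasSum.tendsto_sum_nat).const_mul (β ^ 2))
  convert hlim using 2 with n
  · rw [meanEnergy_eq K ρ β h hKsum]
    ring
  · ring

lemma annEnergy_le {ρ : ℕ → ℝ} (hρ : Summable fun d => |ρ d|) {m : ℕ} (c : Composition m) :
    annEnergy ρ β h c ≤ m * (|h + β ^ 2 / 2| + β ^ 2 * ∑' d, |ρ d|) := by
  have hlen : (c.length : ℝ) ≤ m := by exact_mod_cast c.length_le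
  calc annEnergy ρ β h c ≤ c.length * |h + β ^ 2 / 2| + β ^ 2 * (c.length * ∑' d, |ρ d|) := by
        rw [annEnergy]
        gcongr
        · exact le_abs_self _
        · exact c.pairSum_le_length_mul_tsum hρ
    _ = c.length * (|h + β ^ 2 / 2| + β ^ 2 * ∑' d, |ρ d|) := by ring
    _ ≤ m * (|h + β ^ 2 / 2| + β ^ 2 * ∑' d, |ρ d|) := by gcongr

lemma log_Zfree_le (hK : ∀ n, 0 ≤ K (n + 1)) (hKsum : HasSum (fun n => K (n + 1)) 1)
    {ρ : ℕ → ℝ} (hρ : Summable fun d => |ρ d|) (n : ℕ) :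
    log (Zfree K ρ β h n) ≤ n * (|h + β ^ 2 / 2| + β ^ 2 * ∑' d, |ρ d|) := by
  have hpos := (exp_pos _).trans_le (exp_meanEnergy_le_Zfree ρ β h hK hKsum n)
  rw [log_le_iff_le_exp hpos, Zfree_eq_sum_freeWeight_mul_exp]
  calc ∑ x ∈ freeConfigs n, freeWeight K n x * exp (annEnergy ρ β h x.2)
      ≤ ∑ x ∈ freeConfigs n, freeWeight K n x
          * exp (n * (|h + β ^ 2 / 2| + β ^ 2 * ∑' d, |ρ d|)) := by
        refine sum_le_sum fun x hx => mul_le_mul_of_nonneg_left (exp_le_exp.2 ?_)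
          (freeWeight_nonneg hK n x)
        refine (annEnergy_le β h hρ x.2).trans (mul_le_mul_of_nonneg_right ?_ ?_)
        · simp only [freeConfigs, mem_sigma, mem_range] at hx
          exact_mod_cast (by omega : x.1 ≤ n)
        · positivity
    _ = _ := by rw [← sum_mul, sum_freeWeight K hKsum, one_mul]

end FreePartitionFunction

theorem free_energy_lower_bound_general (K ρ : ℕ → ℝ)
    (hKpos : ∀ n : ℕ, 1 ≤ n → 0 < K n)
    (hKsum : HasSum (fun n : ℕ => K (n + 1)) 1)
    (hρ : Summable fun n : ℕ => |ρ (n + 1)|)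
    (hKmean : Summable fun n : ℕ => ((n : ℝ) + 1) * K (n + 1))
    (β h : ℝ) :
    (1 / ∑' n : ℕ, ((n : ℝ) + 1) * K (n + 1)) *
        (h + β ^ 2 / 2 * (1 + 2 * ∑' n : ℕ, ρ (n + 1) * renewalMass K (n + 1)))
      ≤ Filter.liminf (fun n : ℕ => (1 / (n : ℝ)) * Real.log (Zfree K ρ β h n)) atTop ∧
      (-(β ^ 2 / 2 * (1 + 2 * ∑' n : ℕ, ρ (n + 1) * renewalMass K (n + 1))) < h →
        0 < Filter.liminf (fun n : ℕ => (1 / (n : ℝ)) * Real.log (Zfree K ρ β h n)) atTop) := by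
  have hK : ∀ n, 0 ≤ K (n + 1) := fun n => (hKpos _ (by omega)).le
  have hτ := Filter.le_liminf_of_tendsto_of_eventually_le
    (f := fun n : ℕ => 1 / (n : ℝ) * log (Zfree K ρ β h n))
    (B := |h + β ^ 2 / 2| + β ^ 2 * ∑' d, |ρ d|) (tendsto_meanEnergy_div β h hK hKsum hρ hKmean)
    (Eventually.of_forall fun n => ?lower) (eventually_ge_atTop 1 |>.mono fun n hn => ?upper)
  · refine ⟨hτ, fun hh => lt_of_lt_of_le (mul_pos ?_ (by linarith)) hτ⟩
    exact one_div_pos.2 (by linarith [one_le_mean K hK hKsum hKmean])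
  · rw [one_div_mul_eq_div]
    exact div_le_div_of_nonneg_right (meanEnergy_le_log_Zfree ρ β h hK hKsum n) n.cast_nonneg
  · have hn : (0 : ℝ) < n := by exact_mod_cast hn
    rw [one_div_mul_eq_div, div_le_iff₀ hn, mul_comm]
    exact log_Zfree_le β h hK hKsum ((summable_nat_add_iff 1).1 hρ) n

/-- Lower bound for the free annealed free energy when `m = Σ n K(n) < ∞`:
`liminf (1/n) log Z^{free}_n ≥ (1/m)(h + (β²/2)(1 + 2 Σ ρ(n) u(n)))`; in particular the
liminf is positive when `h > −(β²/2)(1 + 2 Σ ρ(n) u(n))`. -/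
theorem free_energy_lower_bound (K ρ : ℕ → ℝ)
    (hKpos : ∀ n : ℕ, 1 ≤ n → 0 < K n)
    (hKsum : HasSum (fun n : ℕ => K (n + 1)) 1)
    (hρ : Summable fun n : ℕ => |ρ (n + 1)|)
    (hKmean : Summable fun n : ℕ => ((n : ℝ) + 1) * K (n + 1))
    (β h : ℝ) (hβ : 0 ≤ β) :
    (1 / ∑' n : ℕ, ((n : ℝ) + 1) * K (n + 1)) *
        (h + β ^ 2 / 2 * (1 + 2 * ∑' n : ℕ, ρ (n + 1) * renewalMass K (n + 1)))
      ≤ Filter.liminf (fun n : ℕ => (1 / (n : ℝ)) * Real.log (Zfree K ρ β h n)) atTop ∧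
      (-(β ^ 2 / 2 * (1 + 2 * ∑' n : ℕ, ρ (n + 1) * renewalMass K (n + 1))) < h →
        0 < Filter.liminf (fun n : ℕ => (1 / (n : ℝ)) * Real.log (Zfree K ρ β h n)) atTop) :=
  free_energy_lower_bound_general K ρ hKpos hKsum hρ hKmean β h
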